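/- arXiv:2410.15718 — 3 statements merged into one kernel-verified Lean document; each statement's English description precedes it below -/
import Mathlib

section
/- If f₁ and f₂ are both maximum flows in the network D, then the collection of vertex sets of the strongly connected components of the residual network D_{f₁} equals the collection of vertex sets of the strongly connected components of D_{f₂}. -/
open Finset
open scoped Classical

/-- A network: a finite directed graph with edge set `E`, capacity `c`,
source `s` and sink `t`. -/
structure Network (V : Type*) [Fintype V] [DecidableEq V] where
  E : Finset (V × V)
  c : V × V → ℝ
  s : V
  t : V
  hst : s ≠ t
  hc : ∀ e ∈ E, 0 ≤ c e

namespace Network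

variable {V : Type*} [Fintype V] [DecidableEq V] (N : Network V)

/-- `f` is a flow on the network: capacity constraints and conservation at
every vertex other than `s` and `t`. -/
def IsFlow (f : V × V → ℝ) : Prop :=
  (∀ e ∈ N.E, 0 ≤ f e ∧ f e ≤ N.c e) ∧
  ∀ v : V, v ≠ N.s → v ≠ N.t →
    (∑ e ∈ N.E.filter (fun e => e.1 = v), f e) =
      ∑ e ∈ N.E.filter (fun e => e.2 = v), f e

/-- The value of a flow: net amount leaving the source. -/
noncomputable def value (f : V × V → ℝ) : ℝ :=
  (∑ e ∈ N.E.filter (fun e => e.1 = N.s), f e) -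
    ∑ e ∈ N.E.filter (fun e => e.2 = N.s), f e

/-- `f` is a maximum flow. -/
def IsMaxFlow (f : V × V → ℝ) : Prop :=
  N.IsFlow f ∧ ∀ g, N.IsFlow g → N.value g ≤ N.value f

/-- `(u,v)` is an edge of the residual network `D_f`. -/
def ResEdge (f : V × V → ℝ) (u v : V) : Prop :=
  ((u, v) ∈ N.E ∧ f (u, v) < N.c (u, v)) ∨ ((v, u) ∈ N.E ∧ 0 < f (v, u))

/-- Reachability by a directed path in the residual network `D_f`. -/
def ResReach (f : V × V → ℝ) : V → V → Prop :=
  Relation.ReflTransGen (N.ResEdge f)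

/-- `u` and `v` lie in the same strongly connected component of `D_f`. -/
def SameSCC (f : V × V → ℝ) (u v : V) : Prop :=
  N.ResReach f u v ∧ N.ResReach f v u

/-- The collection of vertex sets of strongly connected components of `D_f`. -/
def sccSets (f : V × V → ℝ) : Set (Set V) :=
  {B | ∃ u : V, B = {v | N.SameSCC f u v}}

/-- The cut `δ⁺(S)`: edges leaving `S`. -/
def cutEdges (S : Finset V) : Finset (V × V) :=
  N.E.filter fun e => e.1 ∈ S ∧ e.2 ∉ S

/-- The capacity of the cut `δ⁺(S)`. -/
noncomputable def cutCap (S : Finset V) : ℝ := ∑ e ∈ N.cutEdges S, N.c e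

/-- `δ⁺(S)` is a minimum `s`–`t` cut. -/
def IsMinCut (S : Finset V) : Prop :=
  N.s ∈ S ∧ N.t ∉ S ∧
    ∀ T : Finset V, N.s ∈ T → N.t ∉ T → N.cutCap S ≤ N.cutCap T

/-- An essential edge: saturated by every maximum flow. -/
def Essential (e : V × V) : Prop :=
  e ∈ N.E ∧ ∀ f, N.IsMaxFlow f → f e = N.c e

/-- A dummy I edge: some maximum flow satisfies `0 < f e < c e`. -/
def DummyI (e : V × V) : Prop :=
  e ∈ N.E ∧ ∃ f, N.IsMaxFlow f ∧ 0 < f e ∧ f e < N.c e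

/-- A dummy II edge: empty in every maximum flow. -/
def DummyII (e : V × V) : Prop :=
  e ∈ N.E ∧ ∀ f, N.IsMaxFlow f → f e = 0

/-- `es` is (the edge list of) a directed path in `D` from `u` to `v`. -/
def IsPath (es : List (V × V)) (u v : V) : Prop :=
  (∀ e ∈ es, e ∈ N.E) ∧ es.Chain' (fun a b => a.2 = b.1) ∧
  (es.map Prod.fst).head? = some u ∧ (es.map Prod.snd).getLast? = some v

/-- A potential function on the network. -/
def IsPotential (π : V → ℝ) : Prop :=
  (∀ v, 0 ≤ π v ∧ π v ≤ 1) ∧ π N.s = 1 ∧ π N.t = 0 ∧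
  (∀ u v : V, N.Essential (u, v) → π v ≤ π u) ∧
  (∀ u v : V, (u, v) ∈ N.E → ¬ N.Essential (u, v) → π u ≤ π v)

/-- `diff*(π)`: the potential difference on essential edges, `0` elsewhere. -/
noncomputable def diffStar (π : V → ℝ) : V × V → ℝ :=
  fun e => if N.Essential e then π e.1 - π e.2 else 0

/-- The indicator vector of the cut `δ⁺(S)`. -/
noncomputable def cutIndicator (S : Finset V) : V × V → ℝ :=
  fun e => if e ∈ N.cutEdges S then 1 else 0

/-- A dual-feasible pair `(y, π)` for the minimum cut linear program. -/
def DualFeasible (y : V × V → ℝ) (π : V → ℝ) : Prop :=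
  π N.s = 1 ∧ π N.t = 0 ∧ (∀ e ∈ N.E, 0 ≤ y e) ∧
  ∀ e ∈ N.E, 0 ≤ π e.2 - π e.1 + y e

/-- The dual objective `∑_{e ∈ E} c(e) y(e)`. -/
noncomputable def dualObj (y : V × V → ℝ) : ℝ := ∑ e ∈ N.E, N.c e * y e

end Network

namespace NetworkAux

open Network

variable {V : Type*} [Fintype V] [DecidableEq V] (N : Network V)

/-- net outflow at a vertex -/
noncomputable def netOut (f : V × V → ℝ) (v : V) : ℝ :=
  (∑ e ∈ N.E.filter (fun e => e.1 = v), f e) -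
    ∑ e ∈ N.E.filter (fun e => e.2 = v), f e

lemma sum_fst_mem (f : V × V → ℝ) (S : Finset V) :
    ∑ v ∈ S, ∑ e ∈ N.E.filter (fun e => e.1 = v), f e
      = ∑ e ∈ N.E, if e.1 ∈ S then f e else 0 := by
  simp only [Finset.sum_filter]
  rw [Finset.sum_comm]
  refine Finset.sum_congr rfl fun e _ => ?_
  rw [Finset.sum_ite_eq S e.1 (fun _ => f e)]

lemma sum_snd_mem (f : V × V → ℝ) (S : Finset V) :
    ∑ v ∈ S, ∑ e ∈ N.E.filter (fun e => e.2 = v), f e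
      = ∑ e ∈ N.E, if e.2 ∈ S then f e else 0 := by
  simp only [Finset.sum_filter]
  rw [Finset.sum_comm]
  refine Finset.sum_congr rfl fun e _ => ?_
  rw [Finset.sum_ite_eq S e.2 (fun _ => f e)]

lemma total_net (f : V × V → ℝ) : ∑ v ∈ Finset.univ, netOut N f v = 0 := by
  unfold netOut
  rw [Finset.sum_sub_distrib, sum_fst_mem, sum_snd_mem]
  simp

lemma net_t (f : V × V → ℝ) (hf : N.IsFlow f) : netOut N f N.t = - N.value f := by
  have h0 := total_net N f
  have hs : netOut N f N.s = N.value f := rfl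
  have hpt : ∀ v ∈ Finset.univ, netOut N f v =
      (if v = N.s then N.value f else 0) +
        (if v = N.t then netOut N f N.t else 0) := by
    intro v _
    by_cases hvs : v = N.s
    · subst hvs
      simp [hs, N.hst]
    · by_cases hvt : v = N.t
      · subst hvt; simp [hvs]
      · have := hf.2 v hvs hvt
        simp [netOut, hvs, hvt, this]
  rw [Finset.sum_congr rfl hpt, Finset.sum_add_distrib] at h0
  rw [Finset.sum_ite_eq' Finset.univ N.s, Finset.sum_ite_eq' Finset.univ N.t] at h0
  simp at h0
  linarith

lemma net_sum (f : V × V → ℝ) (hf : N.IsFlow f) (S : Finset V) :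
    ∑ v ∈ S, netOut N f v =
      (if N.s ∈ S then N.value f else 0) - (if N.t ∈ S then N.value f else 0) := by
  have hpt : ∀ v ∈ S, netOut N f v =
      (if v = N.s then N.value f else 0) + (if v = N.t then - N.value f else 0) := by
    intro v _
    by_cases hvs : v = N.s
    · subst hvs
      have hs : netOut N f N.s = N.value f := rfl
      simp [hs, N.hst]
    · by_cases hvt : v = N.t
      · subst hvt; simp [hvs, net_t N f hf]
      · have := hf.2 v hvs hvt
        simp [netOut, hvs, hvt, this]
  rw [Finset.sum_congr rfl hpt, Finset.sum_add_distrib,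
    Finset.sum_ite_eq' S N.s, Finset.sum_ite_eq' S N.t]
  by_cases h1 : N.s ∈ S <;> by_cases h2 : N.t ∈ S <;> simp [h1, h2]

lemma cross_eq (f : V × V → ℝ) (hf : N.IsFlow f) (S : Finset V) :
    (∑ e ∈ N.E.filter (fun e => e.1 ∈ S ∧ e.2 ∉ S), f e)
      - ∑ e ∈ N.E.filter (fun e => e.1 ∉ S ∧ e.2 ∈ S), f e
    = (if N.s ∈ S then N.value f else 0) - (if N.t ∈ S then N.value f else 0) := by
  rw [← net_sum N f hf S]
  unfold netOut
  rw [Finset.sum_sub_distrib, sum_fst_mem, sum_snd_mem,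
    Finset.sum_filter, Finset.sum_filter, ← Finset.sum_sub_distrib,
    ← Finset.sum_sub_distrib]
  refine Finset.sum_congr rfl fun e _ => ?_
  by_cases h1 : e.1 ∈ S <;> by_cases h2 : e.2 ∈ S <;> simp [h1, h2]

lemma value_eq {f₁ f₂ : V × V → ℝ} (h₁ : N.IsMaxFlow f₁) (h₂ : N.IsMaxFlow f₂) :
    N.value f₁ = N.value f₂ :=
  le_antisymm (h₂.2 f₁ h₁.1) (h₁.2 f₂ h₂.1)

/-- If no residual edge of `f₂` leaves `S`, neither does any residual edge
of `f₁`, for two max flows. -/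
lemma no_leave {f₁ f₂ : V × V → ℝ} (h₁ : N.IsMaxFlow f₁) (h₂ : N.IsMaxFlow f₂)
    (S : Finset V) (h : ∀ a ∈ S, ∀ b, b ∉ S → ¬ N.ResEdge f₂ a b) :
    ∀ a ∈ S, ∀ b, b ∉ S → ¬ N.ResEdge f₁ a b := by
  set Eout := N.E.filter (fun e => e.1 ∈ S ∧ e.2 ∉ S) with hEout
  set Ein := N.E.filter (fun e => e.1 ∉ S ∧ e.2 ∈ S) with hEin
  have hout2 : ∀ e ∈ Eout, f₂ e = N.c e := by
    intro e he
    rw [hEout, Finset.mem_filter] at he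
    have hne := h e.1 he.2.1 e.2 he.2.2
    by_contra hne2
    exact hne (Or.inl ⟨by simpa using he.1, lt_of_le_of_ne (h₂.1.1 e he.1).2 hne2⟩)
  have hin2 : ∀ e ∈ Ein, f₂ e = 0 := by
    intro e he
    rw [hEin, Finset.mem_filter] at he
    have hne := h e.2 he.2.2 e.1 he.2.1
    by_contra hne2
    refine hne (Or.inr ⟨by simpa using he.1, ?_⟩)
    simpa using lt_of_le_of_ne (h₂.1.1 e he.1).1 (Ne.symm hne2)
  have hc2 := cross_eq N f₂ h₂.1 S
  have hc1 := cross_eq N f₁ h₁.1 S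
  rw [value_eq N h₁ h₂] at hc1
  have key : (∑ e ∈ Eout, f₁ e) - ∑ e ∈ Ein, f₁ e = ∑ e ∈ Eout, N.c e := by
    rw [hc1, ← hc2, Finset.sum_congr rfl hout2, Finset.sum_congr rfl hin2]
    simp
  have hmemE : ∀ e ∈ Eout, e ∈ N.E := fun e he =>
    (Finset.mem_filter.mp (hEout ▸ he)).1
  have hmemE' : ∀ e ∈ Ein, e ∈ N.E := fun e he =>
    (Finset.mem_filter.mp (hEin ▸ he)).1
  have hle : ∀ e ∈ Eout, f₁ e ≤ N.c e := fun e he => (h₁.1.1 e (hmemE e he)).2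
  have hnn : ∀ e ∈ Ein, 0 ≤ f₁ e := fun e he => (h₁.1.1 e (hmemE' e he)).1
  have houtle : ∑ e ∈ Eout, f₁ e ≤ ∑ e ∈ Eout, N.c e := Finset.sum_le_sum hle
  have hinnn : 0 ≤ ∑ e ∈ Ein, f₁ e := Finset.sum_nonneg hnn
  have hin0 : ∑ e ∈ Ein, f₁ e = 0 := by linarith
  have hout0 : ∑ e ∈ Eout, f₁ e = ∑ e ∈ Eout, N.c e := by linarith
  have hout1 : ∀ e ∈ Eout, f₁ e = N.c e :=
    (Finset.sum_eq_sum_iff_of_le hle).mp hout0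
  have hin1 : ∀ e ∈ Ein, f₁ e = 0 :=
    (Finset.sum_eq_zero_iff_of_nonneg hnn).mp hin0
  intro a ha b hb hres
  rcases hres with ⟨hmem, hlt⟩ | ⟨hmem, hpos⟩
  · have : ((a, b) : V × V) ∈ Eout := by
      rw [hEout, Finset.mem_filter]; exact ⟨hmem, ha, hb⟩
    exact absurd (hout1 _ this) (ne_of_lt hlt)
  · have : ((b, a) : V × V) ∈ Ein := by
      rw [hEin, Finset.mem_filter]; exact ⟨hmem, hb, ha⟩
    exact absurd (hin1 _ this) (ne_of_gt hpos)

lemma reach_mono {f₁ f₂ : V × V → ℝ} (h₁ : N.IsMaxFlow f₁) (h₂ : N.IsMaxFlow f₂)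
    {u v : V} (h : N.ResReach f₁ u v) : N.ResReach f₂ u v := by
  classical
  set S : Finset V := Finset.univ.filter (fun w => N.ResReach f₂ u w) with hS
  have hu : u ∈ S := by
    rw [hS, Finset.mem_filter]
    exact ⟨Finset.mem_univ _, Relation.ReflTransGen.refl⟩
  have hclosed : ∀ a ∈ S, ∀ b, b ∉ S → ¬ N.ResEdge f₂ a b := by
    intro a ha b hb hres
    rw [hS, Finset.mem_filter] at ha
    exact hb (by rw [hS, Finset.mem_filter]; exact ⟨Finset.mem_univ _, ha.2.tail hres⟩)
  have h1closed := no_leave N h₁ h₂ S hclosed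
  have hall : ∀ w, N.ResReach f₁ u w → w ∈ S := by
    intro w hw
    induction hw with
    | refl => exact hu
    | tail _ hres ih =>
      by_contra hb
      exact h1closed _ ih _ hb hres
  have := hall v h
  rw [hS, Finset.mem_filter] at this
  exact this.2

end NetworkAux

/-- If `f₁` and `f₂` are both maximum flows, then the residual networks
`D_{f₁}` and `D_{f₂}` have the same collection of vertex sets of strongly
connected components. -/
theorem stmt0 {V : Type*} [Fintype V] [DecidableEq V] (N : Network V)
    (f₁ f₂ : V × V → ℝ) (h₁ : N.IsMaxFlow f₁) (h₂ : N.IsMaxFlow f₂) :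
    N.sccSets f₁ = N.sccSets f₂ := by
  have hiff : ∀ u v, N.SameSCC f₁ u v ↔ N.SameSCC f₂ u v := by
    intro u v
    constructor
    · rintro ⟨a, b⟩
      exact ⟨NetworkAux.reach_mono N h₁ h₂ a, NetworkAux.reach_mono N h₁ h₂ b⟩
    · rintro ⟨a, b⟩
      exact ⟨NetworkAux.reach_mono N h₂ h₁ a, NetworkAux.reach_mono N h₂ h₁ b⟩
  have hset : ∀ u, {v | N.SameSCC f₁ u v} = {v | N.SameSCC f₂ u v} := by
    intro u
    ext v
    exact hiff u v
  ext B
  constructor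
  · rintro ⟨u, rfl⟩
    exact ⟨u, hset u⟩
  · rintro ⟨u, rfl⟩
    exact ⟨u, (hset u).symm⟩
end

section
/- (Picard–Queyranne) Let f be a maximum flow in the network D and let S ⊆ V with s ∈ S and t ∉ S. Then the s–t cut δ⁺(S) is a minimum cut in D if and only if for every u ∈ S, whenever (u,v) ∈ E_f one has v ∈ S. -/
open Finset
open scoped Classical

namespace Network

variable {V : Type*} [Fintype V] [DecidableEq V] (N : Network V)

/-- Excess at a vertex: outflow minus inflow. -/
noncomputable def exc (h : V × V → ℝ) (v : V) : ℝ :=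
  (∑ e ∈ N.E.filter (fun e => e.1 = v), h e) -
    ∑ e ∈ N.E.filter (fun e => e.2 = v), h e

lemma value_eq_exc (h : V × V → ℝ) : N.value h = N.exc h N.s := rfl

lemma exc_eq_zero (f : V × V → ℝ) (hf : N.IsFlow f) (v : V)
    (h1 : v ≠ N.s) (h2 : v ≠ N.t) : N.exc f v = 0 :=
  sub_eq_zero.mpr (hf.2 v h1 h2)

lemma sum_update_add (F : Finset (V × V)) (h : V × V → ℝ) (e0 : V × V) (δ : ℝ) :
    (∑ e ∈ F, Function.update h e0 (h e0 + δ) e) =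
      (∑ e ∈ F, h e) + if e0 ∈ F then δ else 0 := by
  by_cases hm : e0 ∈ F
  · rw [Finset.sum_update_of_mem hm, if_pos hm, ← Finset.add_sum_erase F h hm,
      Finset.sdiff_singleton_eq_erase]
    ring
  · rw [if_neg hm, add_zero]
    exact Finset.sum_congr rfl fun e he =>
      Function.update_of_ne (by rintro rfl; exact hm he) _ _

lemma exc_update (h : V × V → ℝ) (e0 : V × V) (he0 : e0 ∈ N.E) (δ : ℝ) (v : V) :
    N.exc (Function.update h e0 (h e0 + δ)) v =
      N.exc h v + δ * ((if e0.1 = v then 1 else 0) - (if e0.2 = v then 1 else 0)) := by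
  unfold exc
  rw [sum_update_add, sum_update_add]
  have h1 : (e0 ∈ N.E.filter (fun e => e.1 = v)) ↔ (e0.1 = v) := by
    simp [Finset.mem_filter, he0]
  have h2 : (e0 ∈ N.E.filter (fun e => e.2 = v)) ↔ (e0.2 = v) := by
    simp [Finset.mem_filter, he0]
  by_cases c1 : e0.1 = v <;> by_cases c2 : e0.2 = v <;>
    simp only [c1, c2, h1, h2, if_pos, if_neg, iff_true, iff_false, if_true, if_false] <;>
    ring

/-- Augmentation along a residual path: if `t` is residual-reachable from `u`,
one can shift a small positive amount of flow from `u` to `t`. -/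
lemma aug (f : V × V → ℝ) (hf : ∀ e ∈ N.E, 0 ≤ f e ∧ f e ≤ N.c e)
    (u : V) (hr : N.ResReach f u N.t) :
    ∀ ε : ℝ, 0 < ε → ∃ ε' : ℝ, ∃ g : V × V → ℝ, 0 < ε' ∧ ε' ≤ ε ∧
      (∀ e ∈ N.E, 0 ≤ g e ∧ g e ≤ N.c e) ∧ (∀ e, |g e - f e| ≤ ε) ∧
      (∀ v, N.exc g v = N.exc f v +
        ε' * ((if u = v then 1 else 0) - (if N.t = v then 1 else 0))) := by
  induction hr using Relation.ReflTransGen.head_induction_on with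
  | refl =>
      intro ε hε
      exact ⟨ε, f, hε, le_rfl, hf, fun e => by simp [hε.le], fun v => by ring⟩
  | @head a w h1 h2 ih =>
      intro ε hε
      rcases h1 with ⟨hmem, hlt⟩ | ⟨hmem, hpos⟩
      · -- forward along (a, w)
        have hδ : 0 < N.c (a, w) - f (a, w) := by linarith
        set δ : ℝ := N.c (a, w) - f (a, w) with hδdef
        have hε₀ : 0 < min (ε / 2) (δ / 2) := lt_min (by linarith) (by linarith)
        obtain ⟨ε', g, hp, hle, hfeas, hdev, hexc⟩ := ih _ hε₀
        have hle1 : ε' ≤ ε / 2 := hle.trans (min_le_left _ _)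
        have hle2 : ε' ≤ δ / 2 := hle.trans (min_le_right _ _)
        have hdev' : ∀ e, |g e - f e| ≤ ε / 2 := fun e => (hdev e).trans (min_le_left _ _)
        have hdevδ : ∀ e, |g e - f e| ≤ δ / 2 := fun e => (hdev e).trans (min_le_right _ _)
        refine ⟨ε', Function.update g (a, w) (g (a, w) + ε'), hp, by linarith, ?_, ?_, ?_⟩
        · intro e he
          by_cases hcase : e = (a, w)
          · subst hcase
            rw [Function.update_self]
            have hb := abs_le.mp (hdevδ (a, w))
            refine ⟨by linarith [(hfeas (a, w) he).1], ?_⟩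
            have hδ' : δ = N.c (a, w) - f (a, w) := hδdef
            linarith [hb.2]
          · rw [Function.update_of_ne hcase]; exact hfeas e he
        · intro e
          by_cases hcase : e = (a, w)
          · subst hcase
            rw [Function.update_self]
            have hb := abs_le.mp (hdev' (a, w))
            rw [abs_le]
            constructor <;> [linarith [hb.1]; linarith [hb.2]]
          · rw [Function.update_of_ne hcase]
            exact (hdev' e).trans (by linarith)
        · intro v
          rw [N.exc_update g (a, w) hmem ε' v, hexc v]
          by_cases hav : a = v <;> by_cases hwv : w = v <;> by_cases htv : N.t = v <;>
            simp only [hav, hwv, htv, if_true, if_false, if_pos, if_neg, not_false_iff] <;>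
            simp [hav, hwv, htv] <;> ring
      · -- backward along (w, a)
        have hδ : 0 < f (w, a) := hpos
        set δ : ℝ := f (w, a) with hδdef
        have hε₀ : 0 < min (ε / 2) (δ / 2) := lt_min (by linarith) (by linarith)
        obtain ⟨ε', g, hp, hle, hfeas, hdev, hexc⟩ := ih _ hε₀
        have hle1 : ε' ≤ ε / 2 := hle.trans (min_le_left _ _)
        have hle2 : ε' ≤ δ / 2 := hle.trans (min_le_right _ _)
        have hdev' : ∀ e, |g e - f e| ≤ ε / 2 := fun e => (hdev e).trans (min_le_left _ _)
        have hdevδ : ∀ e, |g e - f e| ≤ δ / 2 := fun e => (hdev e).trans (min_le_right _ _)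
        refine ⟨ε', Function.update g (w, a) (g (w, a) + (-ε')), hp, by linarith, ?_, ?_, ?_⟩
        · intro e he
          by_cases hcase : e = (w, a)
          · subst hcase
            rw [Function.update_self]
            have hb := abs_le.mp (hdevδ (w, a))
            have hδ' : δ = f (w, a) := hδdef
            refine ⟨by linarith [hb.1], ?_⟩
            linarith [(hfeas (w, a) he).2]
          · rw [Function.update_of_ne hcase]; exact hfeas e he
        · intro e
          by_cases hcase : e = (w, a)
          · subst hcase
            rw [Function.update_self]
            have hb := abs_le.mp (hdev' (w, a))
            rw [abs_le]
            constructor <;> [linarith [hb.1]; linarith [hb.2]]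
          · rw [Function.update_of_ne hcase]
            exact (hdev' e).trans (by linarith)
        · intro v
          rw [N.exc_update g (w, a) hmem (-ε') v, hexc v]
          by_cases hav : a = v <;> by_cases hwv : w = v <;> by_cases htv : N.t = v <;>
            simp [hav, hwv, htv] <;> ring

/-- Summing excesses over a vertex set gives the net flow across the cut. -/
lemma sum_exc (g : V × V → ℝ) (S : Finset V) :
    (∑ v ∈ S, N.exc g v) =
      (∑ e ∈ N.E.filter (fun e => e.1 ∈ S ∧ e.2 ∉ S), g e) -
        ∑ e ∈ N.E.filter (fun e => e.1 ∉ S ∧ e.2 ∈ S), g e := by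
  have key : ∀ (π : V × V → V),
      (∑ v ∈ S, ∑ e ∈ N.E.filter (fun e => π e = v), g e) =
        ∑ e ∈ N.E, if π e ∈ S then g e else 0 := by
    intro π
    calc (∑ v ∈ S, ∑ e ∈ N.E.filter (fun e => π e = v), g e)
        = ∑ v ∈ S, ∑ e ∈ N.E, if π e = v then g e else 0 :=
          Finset.sum_congr rfl fun v _ => Finset.sum_filter _ _
      _ = ∑ e ∈ N.E, ∑ v ∈ S, if π e = v then g e else 0 := Finset.sum_comm
      _ = ∑ e ∈ N.E, if π e ∈ S then g e else 0 :=
          Finset.sum_congr rfl fun e _ => Finset.sum_ite_eq S (π e) (fun _ => g e)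
  unfold exc
  rw [Finset.sum_sub_distrib, key Prod.fst, key Prod.snd,
    Finset.sum_filter, Finset.sum_filter, ← Finset.sum_sub_distrib,
    ← Finset.sum_sub_distrib]
  refine Finset.sum_congr rfl fun e he => ?_
  by_cases h1 : e.1 ∈ S <;> by_cases h2 : e.2 ∈ S <;> simp [h1, h2]

lemma value_cut (g : V × V → ℝ) (hg : N.IsFlow g) (S : Finset V)
    (hs : N.s ∈ S) (ht : N.t ∉ S) :
    N.value g = (∑ e ∈ N.cutEdges S, g e) -
      ∑ e ∈ N.E.filter (fun e => e.1 ∉ S ∧ e.2 ∈ S), g e := by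
  have h1 : (∑ v ∈ S, N.exc g v) = N.exc g N.s := by
    rw [← Finset.add_sum_erase S _ hs]
    have h0 : (∑ v ∈ S.erase N.s, N.exc g v) = 0 :=
      Finset.sum_eq_zero fun v hv =>
        N.exc_eq_zero g hg v (Finset.ne_of_mem_erase hv)
          (by rintro rfl; exact ht (Finset.mem_of_mem_erase hv))
    rw [h0, add_zero]
  rw [value_eq_exc, ← h1, sum_exc]
  rfl

lemma value_le_cutCap (g : V × V → ℝ) (hg : N.IsFlow g) (T : Finset V)
    (hs : N.s ∈ T) (ht : N.t ∉ T) : N.value g ≤ N.cutCap T := by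
  rw [N.value_cut g hg T hs ht]
  have h1 : (∑ e ∈ N.cutEdges T, g e) ≤ N.cutCap T :=
    Finset.sum_le_sum fun e he => (hg.1 e (Finset.mem_of_mem_filter e he)).2
  have h2 : 0 ≤ ∑ e ∈ N.E.filter (fun e => e.1 ∉ T ∧ e.2 ∈ T), g e :=
    Finset.sum_nonneg fun e he => (hg.1 e (Finset.mem_of_mem_filter e he)).1
  linarith

lemma value_eq_of_closed (f : V × V → ℝ) (hf : N.IsFlow f) (S : Finset V)
    (hs : N.s ∈ S) (ht : N.t ∉ S)
    (hcl : ∀ u ∈ S, ∀ v : V, N.ResEdge f u v → v ∈ S) :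
    N.value f = N.cutCap S := by
  rw [N.value_cut f hf S hs ht]
  have h1 : ∀ e ∈ N.cutEdges S, f e = N.c e := by
    intro e he
    obtain ⟨heE, hS1, hS2⟩ := Finset.mem_filter.mp he
    by_contra hne
    have hlt : f e < N.c e := lt_of_le_of_ne (hf.1 e heE).2 hne
    exact hS2 (hcl e.1 hS1 e.2 (Or.inl ⟨by rwa [Prod.mk.eta], by rwa [Prod.mk.eta]⟩))
  have h2 : ∀ e ∈ N.E.filter (fun e => e.1 ∉ S ∧ e.2 ∈ S), f e = 0 := by
    intro e he
    obtain ⟨heE, hS1, hS2⟩ := Finset.mem_filter.mp he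
    by_contra hne
    have hlt : 0 < f e := lt_of_le_of_ne (hf.1 e heE).1 (Ne.symm hne)
    exact hS1 (hcl e.2 hS2 e.1 (Or.inr ⟨by rwa [Prod.mk.eta], by rwa [Prod.mk.eta]⟩))
  rw [Finset.sum_congr rfl h1, Finset.sum_eq_zero h2, sub_zero]
  rfl

lemma not_reach (f : V × V → ℝ) (hf : N.IsMaxFlow f) : ¬ N.ResReach f N.s N.t := by
  intro hr
  obtain ⟨ε', g, hpos, _, hfeas, _, hexc⟩ := N.aug f hf.1.1 N.s hr 1 one_pos
  have hgflow : N.IsFlow g := by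
    refine ⟨hfeas, fun v h1 h2 => ?_⟩
    have hv := hexc v
    rw [if_neg (fun h => h1 h.symm), if_neg (fun h => h2 h.symm)] at hv
    have h0 : N.exc f v = 0 := N.exc_eq_zero f hf.1 v h1 h2
    have : N.exc g v = 0 := by rw [hv, h0]; ring
    have := sub_eq_zero.mp this
    exact this
  have hval : N.value g = N.value f + ε' := by
    have hv := hexc N.s
    rw [if_pos rfl, if_neg (fun h => N.hst h.symm)] at hv
    rw [value_eq_exc, value_eq_exc, hv]
    ring
  have := hf.2 g hgflow
  linarith

end Network

/-- Picard–Queyranne: for a maximum flow `f` and `S` with `s ∈ S`, `t ∉ S`,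
the cut `δ⁺(S)` is a minimum cut iff no residual edge leaves `S`. -/
theorem stmt5 {V : Type*} [Fintype V] [DecidableEq V] (N : Network V)
    (f : V × V → ℝ) (hf : N.IsMaxFlow f) (S : Finset V)
    (hs : N.s ∈ S) (ht : N.t ∉ S) :
    N.IsMinCut S ↔ ∀ u ∈ S, ∀ v : V, N.ResEdge f u v → v ∈ S := by
  constructor
  · -- min cut → residual-closed
    intro hmin u hu v hres
    set R : Finset V := Finset.univ.filter (fun w => N.ResReach f N.s w) with hR
    have hsR : N.s ∈ R := by
      simp only [hR, Finset.mem_filter, Finset.mem_univ, true_and]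
      exact Relation.ReflTransGen.refl
    have htR : N.t ∉ R := by
      simp only [hR, Finset.mem_filter, Finset.mem_univ, true_and]
      exact N.not_reach f hf
    have hclR : ∀ a ∈ R, ∀ b : V, N.ResEdge f a b → b ∈ R := by
      intro a ha b hab
      simp only [hR, Finset.mem_filter, Finset.mem_univ, true_and] at ha ⊢
      exact ha.tail hab
    have hRval : N.value f = N.cutCap R := N.value_eq_of_closed f hf.1 R hsR htR hclR
    have hSR : N.cutCap S ≤ N.cutCap R := hmin.2.2 R hsR htR
    have hvc := N.value_cut f hf.1 S hs ht
    have hA : (∑ e ∈ N.cutEdges S, f e) ≤ ∑ e ∈ N.cutEdges S, N.c e :=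
      Finset.sum_le_sum fun e he => (hf.1.1 e (Finset.mem_of_mem_filter e he)).2
    have hB : 0 ≤ ∑ e ∈ N.E.filter (fun e => e.1 ∉ S ∧ e.2 ∈ S), f e :=
      Finset.sum_nonneg fun e he => (hf.1.1 e (Finset.mem_of_mem_filter e he)).1
    have hcap : N.cutCap S = ∑ e ∈ N.cutEdges S, N.c e := rfl
    have hAeq : (∑ e ∈ N.cutEdges S, f e) = ∑ e ∈ N.cutEdges S, N.c e := by
      rw [hcap] at hSR; linarith
    have hBeq : (∑ e ∈ N.E.filter (fun e => e.1 ∉ S ∧ e.2 ∈ S), f e) = 0 := by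
      rw [hcap] at hSR; linarith
    have hAterm : ∀ e ∈ N.cutEdges S, f e = N.c e :=
      (Finset.sum_eq_sum_iff_of_le
        (fun e he => (hf.1.1 e (Finset.mem_of_mem_filter e he)).2)).mp hAeq
    have hBterm : ∀ e ∈ N.E.filter (fun e => e.1 ∉ S ∧ e.2 ∈ S), f e = 0 :=
      (Finset.sum_eq_zero_iff_of_nonneg
        (fun e he => (hf.1.1 e (Finset.mem_of_mem_filter e he)).1)).mp hBeq
    by_contra hv
    rcases hres with ⟨h1, h2⟩ | ⟨h1, h2⟩
    · have hmem : (u, v) ∈ N.cutEdges S := Finset.mem_filter.mpr ⟨h1, hu, hv⟩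
      exact absurd (hAterm _ hmem) (ne_of_lt h2)
    · have hmem : (v, u) ∈ N.E.filter (fun e => e.1 ∉ S ∧ e.2 ∈ S) :=
        Finset.mem_filter.mpr ⟨h1, hv, hu⟩
      exact absurd (hBterm _ hmem) (ne_of_gt h2)
  · -- residual-closed → min cut
    intro hcl
    refine ⟨hs, ht, fun T hsT htT => ?_⟩
    rw [← N.value_eq_of_closed f hf.1 S hs ht hcl]
    exact N.value_le_cutCap f hf.1 T hsT htT
end

section
/- Let f be a maximum flow in the network D. If δ⁺(S) is a minimum cut in D (s ∈ S, t ∉ S), then S is a union of vertex sets of strongly connected components of the residual network D_f; equivalently, every strongly connected component of D_f is either contained in S or disjoint from S. -/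
open Finset
open scoped Classical

section Aux

variable {V : Type*} [Fintype V] [DecidableEq V] (N : Network V)

/-- From a residual walk, build an augmenting circulation `χ`. -/
lemma exists_chi (f : V × V → ℝ) {a b : V} (h : N.ResReach f a b) :
    ∃ χ : V × V → ℝ,
      (∀ e ∈ N.E, (0 < χ e → f e < N.c e) ∧ (χ e < 0 → 0 < f e)) ∧
      ∀ v : V, (∑ e ∈ N.E.filter (fun e => e.1 = v), χ e) -
          (∑ e ∈ N.E.filter (fun e => e.2 = v), χ e) =
        (if v = a then 1 else 0) - (if v = b then 1 else 0) := by
  induction h with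
  | refl => exact ⟨0, by simp, by simp⟩
  | @tail m d hreach he ih =>
    obtain ⟨χ, h1, h3⟩ := ih
    rcases he with ⟨hmem, hlt⟩ | ⟨hmem, hpos⟩
    · refine ⟨fun e => χ e + if e = (m, d) then 1 else 0, ?_, ?_⟩
      · intro e heE
        by_cases hed : e = (m, d)
        · simp only [if_pos hed]
          refine ⟨fun _ => ?_, fun hneg => ?_⟩
          · rw [hed]; exact hlt
          · exact (h1 e heE).2 (by linarith)
        · simp only [if_neg hed, add_zero]; exact h1 e heE
      · intro v
        have hs1 : (∑ e ∈ N.E.filter (fun e => e.1 = v),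
            ((if e = (m, d) then (1:ℝ) else 0))) = if v = m then 1 else 0 := by
          rw [Finset.sum_ite_eq' (N.E.filter (fun e => e.1 = v)) (m, d)
            (fun _ => (1:ℝ))]
          simp only [Finset.mem_filter, hmem, true_and]
          by_cases hv : v = m
          · simp [hv]
          · rw [if_neg (mt Eq.symm hv), if_neg hv]
        have hs2 : (∑ e ∈ N.E.filter (fun e => e.2 = v),
            ((if e = (m, d) then (1:ℝ) else 0))) = if v = d then 1 else 0 := by
          rw [Finset.sum_ite_eq' (N.E.filter (fun e => e.2 = v)) (m, d)
            (fun _ => (1:ℝ))]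
          simp only [Finset.mem_filter, hmem, true_and]
          by_cases hv : v = d
          · simp [hv]
          · rw [if_neg (mt Eq.symm hv), if_neg hv]
        rw [Finset.sum_add_distrib, Finset.sum_add_distrib, hs1, hs2]
        have hv := h3 v
        split_ifs at hv ⊢ <;> linarith
    · refine ⟨fun e => χ e - if e = (d, m) then 1 else 0, ?_, ?_⟩
      · intro e heE
        by_cases hed : e = (d, m)
        · simp only [if_pos hed]
          refine ⟨fun hgt => ?_, fun _ => ?_⟩
          · exact (h1 e heE).1 (by linarith)
          · rw [hed]; exact hpos
        · simp only [if_neg hed, sub_zero]; exact h1 e heE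
      · intro v
        have hs1 : (∑ e ∈ N.E.filter (fun e => e.1 = v),
            ((if e = (d, m) then (1:ℝ) else 0))) = if v = d then 1 else 0 := by
          rw [Finset.sum_ite_eq' (N.E.filter (fun e => e.1 = v)) (d, m)
            (fun _ => (1:ℝ))]
          simp only [Finset.mem_filter, hmem, true_and]
          by_cases hv : v = d
          · simp [hv]
          · rw [if_neg (mt Eq.symm hv), if_neg hv]
        have hs2 : (∑ e ∈ N.E.filter (fun e => e.2 = v),
            ((if e = (d, m) then (1:ℝ) else 0))) = if v = m then 1 else 0 := by
          rw [Finset.sum_ite_eq' (N.E.filter (fun e => e.2 = v)) (d, m)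
            (fun _ => (1:ℝ))]
          simp only [Finset.mem_filter, hmem, true_and]
          by_cases hv : v = m
          · simp [hv]
          · rw [if_neg (mt Eq.symm hv), if_neg hv]
        rw [Finset.sum_sub_distrib, Finset.sum_sub_distrib, hs1, hs2]
        have hv := h3 v
        split_ifs at hv ⊢ <;> linarith

end Aux
lemma no_aug_path {V : Type*} [Fintype V] [DecidableEq V] (N : Network V)
    (f : V × V → ℝ) (hf : N.IsMaxFlow f) : ¬ N.ResReach f N.s N.t := by
  intro h
  obtain ⟨χ, h1, h3⟩ := exists_chi N f h
  set A := N.E.filter (fun e => χ e ≠ 0) with hA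
  by_cases hAne : A.Nonempty
  · set ε := A.inf' hAne
      (fun e => if 0 < χ e then (N.c e - f e) / χ e else f e / (-χ e)) with hε
    have hεpos : 0 < ε := by
      rw [hε, Finset.lt_inf'_iff]
      intro e heA
      obtain ⟨heE, hne⟩ := Finset.mem_filter.mp heA
      by_cases hpos : 0 < χ e
      · rw [if_pos hpos]
        exact div_pos (by linarith [(h1 e heE).1 hpos]) hpos
      · rw [if_neg hpos]
        have hneg : χ e < 0 := lt_of_le_of_ne (not_lt.mp hpos) hne
        exact div_pos ((h1 e heE).2 hneg) (by linarith)
    have hεle : ∀ e ∈ A, ε ≤ if 0 < χ e then (N.c e - f e) / χ e else f e / (-χ e) :=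
      fun e heA => Finset.inf'_le _ heA
    set g : V × V → ℝ := fun e => f e + ε * χ e with hg
    have hgflow : N.IsFlow g := by
      constructor
      · intro e heE
        by_cases hne : χ e = 0
        · simp only [hg, hne, mul_zero, add_zero]
          exact hf.1.1 e heE
        · have heA : e ∈ A := Finset.mem_filter.mpr ⟨heE, hne⟩
          have := hεle e heA
          by_cases hpos : 0 < χ e
          · rw [if_pos hpos] at this
            have h2 : ε * χ e ≤ N.c e - f e := (le_div_iff₀ hpos).mp this
            have h0 : 0 ≤ ε * χ e := le_of_lt (mul_pos hεpos hpos)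
            have hb := hf.1.1 e heE
            exact ⟨by simp only [hg]; linarith, by simp only [hg]; linarith⟩
          · have hneg : χ e < 0 := lt_of_le_of_ne (not_lt.mp hpos) hne
            rw [if_neg hpos] at this
            have h2 : -(ε * χ e) ≤ f e := by
              have : ε * (-χ e) ≤ f e := by
                rw [← le_div_iff₀ (by linarith : (0:ℝ) < -χ e)]; exact this
              linarith
            constructor
            · simp only [hg]; linarith
            · have hc := (hf.1.1 e heE).2
              have : ε * χ e ≤ 0 := mul_nonpos_of_nonneg_of_nonpos hεpos.le hneg.le
              simp only [hg]; linarith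
      · intro v hvs hvt
        have hdiv := h3 v
        rw [if_neg hvs, if_neg hvt, sub_self] at hdiv
        simp only [hg]
        rw [Finset.sum_add_distrib, Finset.sum_add_distrib, ← Finset.mul_sum,
          ← Finset.mul_sum, hf.1.2 v hvs hvt]
        have : (∑ e ∈ N.E.filter (fun e => e.1 = v), χ e) =
            ∑ e ∈ N.E.filter (fun e => e.2 = v), χ e := by linarith
        rw [this]
    have hval : N.value g = N.value f + ε := by
      have hdiv := h3 N.s
      rw [if_pos rfl, if_neg N.hst] at hdiv
      unfold Network.value
      simp only [hg]
      rw [Finset.sum_add_distrib, Finset.sum_add_distrib, ← Finset.mul_sum,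
        ← Finset.mul_sum]
      have : (∑ e ∈ N.E.filter (fun e => e.1 = N.s), χ e) -
          ∑ e ∈ N.E.filter (fun e => e.2 = N.s), χ e = 1 := by linarith
      nlinarith [this]
    have := hf.2 g hgflow
    rw [hval] at this
    linarith
  · have hz : ∀ e ∈ N.E, χ e = 0 := by
      intro e heE
      by_contra hne
      exact hAne ⟨e, Finset.mem_filter.mpr ⟨heE, hne⟩⟩
    have hdiv := h3 N.s
    rw [if_pos rfl, if_neg N.hst] at hdiv
    rw [Finset.sum_eq_zero (fun e he => hz e (Finset.mem_filter.mp he).1),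
      Finset.sum_eq_zero (fun e he => hz e (Finset.mem_filter.mp he).1)] at hdiv
    norm_num at hdiv
lemma sum_fiber {V : Type*} [Fintype V] [DecidableEq V] (N : Network V)
    (f : V × V → ℝ) (p : V × V → V) (T : Finset V) :
    ∑ v ∈ T, ∑ e ∈ N.E.filter (fun e => p e = v), f e
      = ∑ e ∈ N.E.filter (fun e => p e ∈ T), f e := by
  simp_rw [Finset.sum_filter]
  rw [Finset.sum_comm]
  exact Finset.sum_congr rfl fun e _ => Finset.sum_ite_eq T (p e) fun _ => f e

lemma value_eq_cut_flow {V : Type*} [Fintype V] [DecidableEq V] (N : Network V)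
    (f : V × V → ℝ) (hf : N.IsFlow f) (T : Finset V) (hs : N.s ∈ T) (ht : N.t ∉ T) :
    N.value f = (∑ e ∈ N.E.filter (fun e => e.1 ∈ T ∧ e.2 ∉ T), f e)
      - ∑ e ∈ N.E.filter (fun e => e.1 ∉ T ∧ e.2 ∈ T), f e := by
  have h1 : ∑ v ∈ T, ((∑ e ∈ N.E.filter (fun e => e.1 = v), f e) -
      ∑ e ∈ N.E.filter (fun e => e.2 = v), f e) = N.value f := by
    rw [← Finset.add_sum_erase T _ hs]
    have hz : ∀ v ∈ T.erase N.s, ((∑ e ∈ N.E.filter (fun e => e.1 = v), f e) -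
        ∑ e ∈ N.E.filter (fun e => e.2 = v), f e) = 0 := by
      intro v hv
      have hvs := Finset.ne_of_mem_erase hv
      have hvt : v ≠ N.t := fun h => ht (h ▸ (Finset.mem_of_mem_erase hv))
      rw [hf.2 v hvs hvt, sub_self]
    rw [Finset.sum_eq_zero hz, add_zero]
    rfl
  rw [Finset.sum_sub_distrib, sum_fiber N f Prod.fst T, sum_fiber N f Prod.snd T] at h1
  have h2 := Finset.sum_filter_add_sum_filter_not
    (N.E.filter (fun e => e.1 ∈ T)) (fun e => e.2 ∈ T) f
  have h3 := Finset.sum_filter_add_sum_filter_not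
    (N.E.filter (fun e => e.2 ∈ T)) (fun e => e.1 ∈ T) f
  rw [Finset.filter_filter, Finset.filter_filter] at h2
  rw [Finset.filter_filter, Finset.filter_filter] at h3
  have hswap : N.E.filter (fun e => e.2 ∈ T ∧ e.1 ∈ T)
      = N.E.filter (fun e => e.1 ∈ T ∧ e.2 ∈ T) :=
    Finset.filter_congr fun e _ => and_comm
  have hswap2 : N.E.filter (fun e => e.2 ∈ T ∧ ¬ e.1 ∈ T)
      = N.E.filter (fun e => ¬ e.1 ∈ T ∧ e.2 ∈ T) :=
    Finset.filter_congr fun e _ => and_comm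
  rw [hswap, hswap2] at h3
  linarith

lemma mincut_saturated {V : Type*} [Fintype V] [DecidableEq V] (N : Network V)
    (f : V × V → ℝ) (hf : N.IsMaxFlow f) (S : Finset V) (hS : N.IsMinCut S) :
    (∀ e ∈ N.E, e.1 ∈ S → e.2 ∉ S → f e = N.c e) ∧
    (∀ e ∈ N.E, e.1 ∉ S → e.2 ∈ S → f e = 0) := by
  obtain ⟨hsS, htS, hmin⟩ := hS
  set T := Finset.univ.filter (fun v => N.ResReach f N.s v) with hT
  have hmemT : ∀ v, v ∈ T ↔ N.ResReach f N.s v := by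
    intro v; simp [hT]
  have hsT : N.s ∈ T := (hmemT _).mpr Relation.ReflTransGen.refl
  have htT : N.t ∉ T := fun h => no_aug_path N f hf ((hmemT _).mp h)
  -- residual closure of T
  have hTsat : ∀ e ∈ N.E, e.1 ∈ T → e.2 ∉ T → f e = N.c e := by
    intro e heE h1 h2
    by_contra hne
    have hlt : f e < N.c e := lt_of_le_of_ne (hf.1.1 e heE).2 hne
    exact h2 ((hmemT _).mpr (((hmemT _).mp h1).tail
      (Or.inl ⟨by simpa using heE, by simpa using hlt⟩)))
  have hTzero : ∀ e ∈ N.E, e.1 ∉ T → e.2 ∈ T → f e = 0 := by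
    intro e heE h1 h2
    by_contra hne
    have hpos : 0 < f e := lt_of_le_of_ne (hf.1.1 e heE).1 (Ne.symm hne)
    exact h1 ((hmemT _).mpr (((hmemT _).mp h2).tail
      (Or.inr ⟨by simpa using heE, by simpa using hpos⟩)))
  -- value f = cutCap T
  have hvT : N.value f = N.cutCap T := by
    rw [value_eq_cut_flow N f hf.1 T hsT htT]
    have e1 : ∑ e ∈ N.E.filter (fun e => e.1 ∈ T ∧ e.2 ∉ T), f e
        = ∑ e ∈ N.E.filter (fun e => e.1 ∈ T ∧ e.2 ∉ T), N.c e :=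
      Finset.sum_congr rfl fun e he => by
        obtain ⟨heE, h1, h2⟩ := Finset.mem_filter.mp he
        exact hTsat e heE h1 h2
    have e2 : ∑ e ∈ N.E.filter (fun e => e.1 ∉ T ∧ e.2 ∈ T), f e = 0 :=
      Finset.sum_eq_zero fun e he => by
        obtain ⟨heE, h1, h2⟩ := Finset.mem_filter.mp he
        exact hTzero e heE h1 h2
    rw [e1, e2, sub_zero]
    rfl
  -- weak duality for S
  have hvS := value_eq_cut_flow N f hf.1 S hsS htS
  have hle1 : ∑ e ∈ N.E.filter (fun e => e.1 ∈ S ∧ e.2 ∉ S), f e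
      ≤ ∑ e ∈ N.E.filter (fun e => e.1 ∈ S ∧ e.2 ∉ S), N.c e :=
    Finset.sum_le_sum fun e he => (hf.1.1 e (Finset.mem_filter.mp he).1).2
  have hle2 : 0 ≤ ∑ e ∈ N.E.filter (fun e => e.1 ∉ S ∧ e.2 ∈ S), f e :=
    Finset.sum_nonneg fun e he => (hf.1.1 e (Finset.mem_filter.mp he).1).1
  have hcutS : N.cutCap S = ∑ e ∈ N.E.filter (fun e => e.1 ∈ S ∧ e.2 ∉ S), N.c e := rfl
  have hweak : N.value f ≤ N.cutCap S := by rw [hvS, hcutS]; linarith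
  have hminST : N.cutCap S ≤ N.cutCap T := hmin T hsT htT
  have heq : N.value f = N.cutCap S := le_antisymm hweak (by linarith)
  -- termwise saturation on S
  have hzero : (∑ e ∈ N.E.filter (fun e => e.1 ∈ S ∧ e.2 ∉ S), (N.c e - f e))
      + ∑ e ∈ N.E.filter (fun e => e.1 ∉ S ∧ e.2 ∈ S), f e = 0 := by
    rw [Finset.sum_sub_distrib]
    rw [heq, hcutS] at hvS
    linarith
  have hnn1 : ∀ e ∈ N.E.filter (fun e => e.1 ∈ S ∧ e.2 ∉ S), 0 ≤ N.c e - f e :=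
    fun e he => by linarith [(hf.1.1 e (Finset.mem_filter.mp he).1).2]
  have hs1 : ∑ e ∈ N.E.filter (fun e => e.1 ∈ S ∧ e.2 ∉ S), (N.c e - f e) = 0 := by
    have := Finset.sum_nonneg hnn1
    linarith
  have hs2 : ∑ e ∈ N.E.filter (fun e => e.1 ∉ S ∧ e.2 ∈ S), f e = 0 := by
    have := Finset.sum_nonneg hnn1
    linarith
  constructor
  · intro e heE h1 h2
    have := (Finset.sum_eq_zero_iff_of_nonneg hnn1).mp hs1 e
      (Finset.mem_filter.mpr ⟨heE, h1, h2⟩)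
    linarith
  · intro e heE h1 h2
    exact (Finset.sum_eq_zero_iff_of_nonneg
      (fun e he => (hf.1.1 e (Finset.mem_filter.mp he).1).1)).mp hs2 e
      (Finset.mem_filter.mpr ⟨heE, h1, h2⟩)

/-- If `δ⁺(S)` is a minimum cut, then `S` is a union of vertex sets of
strongly connected components of `D_f`; equivalently, every SCC of `D_f` is
either contained in `S` or disjoint from `S`. -/
theorem stmt8 {V : Type*} [Fintype V] [DecidableEq V] (N : Network V)
    (f : V × V → ℝ) (hf : N.IsMaxFlow f) (S : Finset V)
    (hS : N.IsMinCut S) :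
    (∃ 𝓑 : Set (Set V), 𝓑 ⊆ N.sccSets f ∧ (↑S : Set V) = ⋃₀ 𝓑) ∧
    (∀ B ∈ N.sccSets f, B ⊆ (↑S : Set V) ∨ B ∩ (↑S : Set V) = ∅) := by
  obtain ⟨hsat, hzero⟩ := mincut_saturated N f hf S hS
  -- S is closed under residual edges
  have hstep : ∀ u v : V, u ∈ S → N.ResEdge f u v → v ∈ S := by
    intro u v hu he
    by_contra hv
    rcases he with ⟨hmem, hlt⟩ | ⟨hmem, hpos⟩
    · rw [hsat (u, v) hmem hu hv] at hlt
      exact lt_irrefl _ hlt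
    · rw [hzero (v, u) hmem hv hu] at hpos
      exact lt_irrefl _ hpos
  have hreach : ∀ u v : V, u ∈ S → N.ResReach f u v → v ∈ S := by
    intro u v hu h
    induction h with
    | refl => exact hu
    | tail _ he ih => exact hstep _ _ ih he
  constructor
  · refine ⟨{B | ∃ u ∈ S, B = {v | N.SameSCC f u v}}, ?_, ?_⟩
    · rintro B ⟨u, _, rfl⟩
      exact ⟨u, rfl⟩
    · ext x
      simp only [Set.mem_sUnion, Set.mem_setOf_eq, Finset.mem_coe]
      constructor
      · intro hx
        exact ⟨{v | N.SameSCC f x v}, ⟨x, hx, rfl⟩,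
          ⟨Relation.ReflTransGen.refl, Relation.ReflTransGen.refl⟩⟩
      · rintro ⟨B, ⟨u, hu, rfl⟩, hx⟩
        exact hreach u x hu hx.1
  · rintro B ⟨u, rfl⟩
    by_cases hu : u ∈ S
    · left
      intro v hv
      exact hreach u v hu hv.1
    · right
      ext v
      simp only [Set.mem_inter_iff, Set.mem_setOf_eq, Finset.mem_coe,
        Set.mem_empty_iff_false, iff_false, not_and]
      intro hvB hvS
      exact hu (hreach v u hvS hvB.2)
end
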